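/- Let A be a Banach algebra and σ ∈ Hom(A) with dense range. If A is σ-weakly amenable, then the linear span of products A² = {ab : a,b ∈ A} is dense in A. -/
import Mathlib


/-- `σ`-weak amenability of a Banach algebra `B`: every bounded `σ`-derivation
`D : B → B*` into the dual bimodule `B*` (with actions `(b·Λ)(x) = Λ(x b)`,
`(Λ·b)(x) = Λ(b x)`) is `σ`-inner. -/
def SigmaWeaklyAmenable (B : Type u) [NonUnitalNormedRing B] [NormedSpace ℂ B]
    (s : B → B) : Prop :=
  ∀ D : B →L[ℂ] (B →L[ℂ] ℂ),
    (∀ a b x, D (a * b) x = D a (s b * x) + D b (x * s a)) →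
    ∃ Λ : B →L[ℂ] ℂ, ∀ a x, D a x = Λ (x * s a) - Λ (s a * x)

/-- if `σ ∈ Hom(A)` has dense range and `A` is `σ`-weakly
amenable, then the linear span of products is dense in `A`. -/
theorem stmt7 {A : Type u} [NonUnitalNormedRing A] [NormedSpace ℂ A]
    [IsScalarTower ℂ A A] [SMulCommClass ℂ A A] [CompleteSpace A]
    (σ : A →L[ℂ] A) (hσ : ∀ a b : A, σ (a * b) = σ a * σ b)
    (hdense : DenseRange σ) (hwa : SigmaWeaklyAmenable A σ) :
    Dense ((Submodule.span ℂ {x : A | ∃ a b : A, x = a * b} : Submodule ℂ A) : Set A) := by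
  by_contra hd
  set P : Submodule ℂ A := Submodule.span ℂ {x : A | ∃ a b : A, x = a * b} with hP
  set S : Submodule ℂ A := P.topologicalClosure with hS
  haveI : IsClosed (S : Set A) := P.isClosed_topologicalClosure
  -- S ≠ ⊤
  have hSne : S ≠ ⊤ := by
    intro h
    exact hd (Submodule.dense_iff_topologicalClosure_eq_top.mpr h)
  obtain ⟨x₀, -, hx₀⟩ := SetLike.exists_of_lt (hSne.lt_top)
  -- the quotient projection as a continuous linear map
  let π : A →L[ℂ] (A ⧸ S) :=
    LinearMap.mkContinuous S.mkQ 1 (fun m => by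
      simpa using Submodule.Quotient.norm_mk_le S m)
  have hπx₀ : π x₀ ≠ 0 := by
    simpa [π, Submodule.Quotient.mk_eq_zero] using hx₀
  obtain ⟨g, hg⟩ := SeparatingDual.exists_ne_zero (R := ℂ) hπx₀
  set lam : A →L[ℂ] ℂ := g.comp π with hlam
  have hlamx₀ : lam x₀ ≠ 0 := hg
  -- lam vanishes on products
  have hprod : ∀ a b : A, lam (a * b) = 0 := by
    intro a b
    have hmem : a * b ∈ S := P.le_topologicalClosure (Submodule.subset_span ⟨a, b, rfl⟩)
    have : π (a * b) = 0 := by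
      simpa [π] using (Submodule.Quotient.mk_eq_zero S).mpr hmem
    simp [hlam, this]
  -- the σ-derivation D a = (lam a) • lam
  set D : A →L[ℂ] (A →L[ℂ] ℂ) := lam.smulRight lam with hD
  have hDapp : ∀ a x, D a x = lam a * lam x := fun a x => rfl
  have hder : ∀ a b x, D (a * b) x = D a (σ b * x) + D b (x * σ a) := by
    intro a b x
    simp [hDapp, hprod]
  obtain ⟨Λ, hΛ⟩ := hwa D hder
  -- key identity
  have key : ∀ a x : A, lam x * lam (σ a) = -(lam a * lam (σ x)) := by
    intro a x
    have h1 : lam a * lam (σ x) = Λ (σ (x * a)) - Λ (σ (a * x)) := by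
      have := hΛ a (σ x)
      rw [hDapp] at this
      rw [this, hσ, hσ]
    have h2 : lam x * lam (σ a) = Λ (σ (a * x)) - Λ (σ (x * a)) := by
      have := hΛ x (σ a)
      rw [hDapp] at this
      rw [this, hσ, hσ]
    rw [h1, h2]; ring
  have diag : ∀ a : A, lam a * lam (σ a) = 0 := by
    intro a
    have := key a a
    linear_combination this / 2
  -- lam vanishes everywhere, contradiction
  have hzero : ∀ x : A, lam x = 0 := by
    by_cases hcase : ∀ a : A, lam (σ a) = 0
    · -- lam ∘ σ = 0 and σ has dense range
      intro x
      have : (lam : A → ℂ) = fun _ => 0 := by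
        apply Continuous.ext_on hdense lam.continuous continuous_const
        rintro y ⟨a, rfl⟩
        exact hcase a
      exact congrFun this x
    · push_neg at hcase
      obtain ⟨a₀, ha₀⟩ := hcase
      have hla₀ : lam a₀ = 0 := by
        have := diag a₀
        rcases mul_eq_zero.mp this with h | h
        · exact h
        · exact absurd h ha₀
      intro x
      have := key a₀ x
      rw [hla₀] at this
      simp only [zero_mul, neg_zero] at this
      rcases mul_eq_zero.mp this with h | h
      · exact h
      · exact absurd h ha₀
  exact hlamx₀ (hzero x₀)
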